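/- In the call-by-value restriction λμμ̃Q (where only values V ::= x | λ(x·α).c | inl V | inr V may be substituted for variables, and βμ fires on any coterm), the full η law for functions is unsound: combining the rule η→ (λ(x·α).⟨v ‖ x·α⟩ → v when x,α ∉ FV(v)) with the call-by-value β rules breaks confluence. Concretely, for commands c₀, c₁ and unused x, α, δ, the command ⟨λ(x·α).⟨μδ.c₀ ‖ x·α⟩ ‖ μ̃x.c₁⟩ reduces to c₁ by βμ̃-CBV and also reduces (via η→ followed by βμ-CBV) to c₀, where c₀ and c₁ may be chosen with no common reduct. -/

import Mathlib

/-!  The λμμ̃-calculus (Curien–Herbelin sequent calculus) with sums,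
     named (co)variables represented by natural numbers. -/

namespace LMM

mutual
  /-- Terms (producers). -/
  inductive Tm : Type
  | var : Nat → Tm                      -- x
  | mu  : Nat → Cmd → Tm                -- μα.c
  | lam : Nat → Nat → Cmd → Tm          -- λ(x·α).c
  | inl : Tm → Tm
  | inr : Tm → Tm

  /-- Coterms (consumers). -/
  inductive CoTm : Type
  | covar : Nat → CoTm                  -- α
  | mut : Nat → Cmd → CoTm              -- μ̃x.c
  | app : Tm → CoTm → CoTm              -- v·e
  | caseSum : Nat → Cmd → Nat → Cmd → CoTm  -- case{inl x ⇒ c₁ | inr y ⇒ c₂}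

  /-- Commands. -/
  inductive Cmd : Type
  | cut : Tm → CoTm → Cmd               -- ⟨v ‖ e⟩
end

mutual
  /-- Substitution of a term for a (term) variable in a term. -/
  def substVTm : Tm → Nat → Tm → Tm
  | .var y, x, v => if y = x then v else .var y
  | .mu a c, x, v => .mu a (substVCmd c x v)
  | .lam y a c, x, v => if y = x then .lam y a c else .lam y a (substVCmd c x v)
  | .inl t, x, v => .inl (substVTm t x v)
  | .inr t, x, v => .inr (substVTm t x v)

  def substVCo : CoTm → Nat → Tm → CoTm
  | .covar b, _, _ => .covar b
  | .mut y c, x, v => if y = x then .mut y c else .mut y (substVCmd c x v)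
  | .app t e, x, v => .app (substVTm t x v) (substVCo e x v)
  | .caseSum y c1 z c2, x, v =>
      .caseSum y (if y = x then c1 else substVCmd c1 x v)
               z (if z = x then c2 else substVCmd c2 x v)

  def substVCmd : Cmd → Nat → Tm → Cmd
  | .cut t e, x, v => .cut (substVTm t x v) (substVCo e x v)
end

mutual
  /-- Substitution of a coterm for a covariable in a term. -/
  def substETm : Tm → Nat → CoTm → Tm
  | .var y, _, _ => .var y
  | .mu b c, a, e => if b = a then .mu b c else .mu b (substECmd c a e)
  | .lam y b c, a, e => if b = a then .lam y b c else .lam y b (substECmd c a e)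
  | .inl t, a, e => .inl (substETm t a e)
  | .inr t, a, e => .inr (substETm t a e)

  def substECo : CoTm → Nat → CoTm → CoTm
  | .covar b, a, e => if b = a then e else .covar b
  | .mut y c, a, e => .mut y (substECmd c a e)
  | .app t e', a, e => .app (substETm t a e) (substECo e' a e)
  | .caseSum y c1 z c2, a, e => .caseSum y (substECmd c1 a e) z (substECmd c2 a e)

  def substECmd : Cmd → Nat → CoTm → Cmd
  | .cut t e', a, e => .cut (substETm t a e) (substECo e' a e)
end

mutual
  /-- Free (term) variables. -/
  def fvTm : Tm → List Nat
  | .var y => [y]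
  | .mu _ c => fvCmd c
  | .lam y _ c => (fvCmd c).filter (· ≠ y)
  | .inl t => fvTm t
  | .inr t => fvTm t

  def fvCo : CoTm → List Nat
  | .covar _ => []
  | .mut y c => (fvCmd c).filter (· ≠ y)
  | .app t e => fvTm t ++ fvCo e
  | .caseSum y c1 z c2 => (fvCmd c1).filter (· ≠ y) ++ (fvCmd c2).filter (· ≠ z)

  def fvCmd : Cmd → List Nat
  | .cut t e => fvTm t ++ fvCo e
end

mutual
  /-- Free covariables. -/
  def fcvTm : Tm → List Nat
  | .var _ => []
  | .mu b c => (fcvCmd c).filter (· ≠ b)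
  | .lam _ b c => (fcvCmd c).filter (· ≠ b)
  | .inl t => fcvTm t
  | .inr t => fcvTm t

  def fcvCo : CoTm → List Nat
  | .covar b => [b]
  | .mut _ c => fcvCmd c
  | .app t e => fcvTm t ++ fcvCo e
  | .caseSum _ c1 _ c2 => fcvCmd c1 ++ fcvCmd c2

  def fcvCmd : Cmd → List Nat
  | .cut t e => fcvTm t ++ fcvCo e
end

end LMM

namespace LMM

/-- Values of the call-by-value sub-calculus λμμ̃Q:
    V ::= x | λ(x·α).c | inl V | inr V. -/
inductive IsVal : Tm → Prop
| var (x : Nat) : IsVal (.var x)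
| lam (x a : Nat) (c : Cmd) : IsVal (.lam x a c)
| inl {v : Tm} : IsVal v → IsVal (.inl v)
| inr {v : Tm} : IsVal v → IsVal (.inr v)

/-- Reduction of the call-by-value calculus λμμ̃Q extended with the full η law
    for functions:
    * βμ-CBV:  ⟨μα.c ‖ e⟩ → c[e/α]   (any coterm e),
    * βμ̃-CBV:  ⟨V ‖ μ̃x.c⟩ → c[V/x]  (only for values V),
    * β→-CBV:  ⟨λ(x·α).c ‖ V·e⟩ → c[V/x][e/α],
    * β⊕-CBV,
    * η→: λ(x·α).⟨v ‖ x·α⟩ → v whenever x,α ∉ FV(v)  (applied here in a cut). -/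
inductive RedQ : Cmd → Cmd → Prop
| betaMu (a : Nat) (c : Cmd) (e : CoTm) :
    RedQ (.cut (.mu a c) e) (substECmd c a e)
| betaMut {v : Tm} (x : Nat) (c : Cmd) :
    IsVal v → RedQ (.cut v (.mut x c)) (substVCmd c x v)
| betaArrow {V : Tm} (x a : Nat) (c : Cmd) (e : CoTm) :
    IsVal V →
    RedQ (.cut (.lam x a c) (.app V e)) (substECmd (substVCmd c x V) a e)
| betaSumL {V : Tm} (x y : Nat) (c₁ c₂ : Cmd) :
    IsVal V → RedQ (.cut (.inl V) (.caseSum x c₁ y c₂)) (substVCmd c₁ x V)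
| betaSumR {V : Tm} (x y : Nat) (c₁ c₂ : Cmd) :
    IsVal V → RedQ (.cut (.inr V) (.caseSum x c₁ y c₂)) (substVCmd c₂ y V)
| etaArrow {v : Tm} (x a : Nat) (e : CoTm) :
    x ∉ fvTm v → a ∉ fcvTm v →
    RedQ (.cut (.lam x a (.cut v (.app (.var x) (.covar a)))) e) (.cut v e)

end LMM

/-! The command ⟨λ(x·α).⟨μδ.c₀ ‖ x·α⟩ ‖ μ̃x.c₁⟩ is a critical pair between βμ̃ and η→. The
λ-abstraction is a value, so βμ̃ discards it and leaves c₁; η→ instead contracts it to μδ.c₀,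
and βμ, which fires against any coterm, then discards μ̃x.c₁ and leaves c₀. Two distinct
commands ⟨x ‖ α⟩ are normal forms, so as c₀ and c₁ they have no common reduct. -/

namespace List

theorem notMem_of_notMem_filter_ne {α : Type*} [DecidableEq α] {l : List α} {x y : α}
    (h : x ∉ l.filter (· ≠ y)) (hy : y ≠ x) : x ∉ l :=
  fun hx => h (mem_filter.2 ⟨hx, by simpa using hy.symm⟩)

end List

namespace Relation

theorem not_join_reflTransGen_of_normal {α : Type*} {r : α → α → Prop} {a b : α}
    (ha : ∀ c, ¬ r a c) (hb : ∀ c, ¬ r b c) (hab : a ≠ b) : ¬ Join (ReflTransGen r) a b := by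
  rintro ⟨c, hac, hbc⟩
  rw [reflTransGen_iff_eq ha] at hac
  rw [reflTransGen_iff_eq hb] at hbc
  exact hab (hac.symm.trans hbc)

end Relation

namespace LMM

open List (notMem_of_notMem_filter_ne)

mutual
theorem substVTm_eq_self {x : Nat} {v : Tm} : ∀ {t : Tm}, x ∉ fvTm t → substVTm t x v = t
  | .var y, h => by simp_all [fvTm, substVTm, eq_comm]
  | .mu _ _, h => by rw [substVTm, substVCmd_eq_self h]
  | .lam y _ _, h => by
      unfold substVTm
      split_ifs with hy
      · rfl
      · rw [substVCmd_eq_self (notMem_of_notMem_filter_ne h hy)]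
  | .inl t, h => congrArg Tm.inl (substVTm_eq_self (t := t) h)
  | .inr t, h => congrArg Tm.inr (substVTm_eq_self (t := t) h)

theorem substVCo_eq_self {x : Nat} {v : Tm} : ∀ {e : CoTm}, x ∉ fvCo e → substVCo e x v = e
  | .covar _, _ => rfl
  | .mut y _, h => by
      unfold substVCo
      split_ifs with hy
      · rfl
      · rw [substVCmd_eq_self (notMem_of_notMem_filter_ne h hy)]
  | .app _ _, h => by
      rw [fvCo, List.mem_append, not_or] at h
      rw [substVCo, substVTm_eq_self h.1, substVCo_eq_self h.2]
  | .caseSum y _ z _, h => by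
      rw [fvCo, List.mem_append, not_or] at h
      unfold substVCo
      split_ifs with hy hz hz
      · rfl
      · rw [substVCmd_eq_self (notMem_of_notMem_filter_ne h.2 hz)]
      · rw [substVCmd_eq_self (notMem_of_notMem_filter_ne h.1 hy)]
      · rw [substVCmd_eq_self (notMem_of_notMem_filter_ne h.1 hy),
          substVCmd_eq_self (notMem_of_notMem_filter_ne h.2 hz)]

theorem substVCmd_eq_self {x : Nat} {v : Tm} : ∀ {c : Cmd}, x ∉ fvCmd c → substVCmd c x v = c
  | .cut _ _, h => by
      rw [fvCmd, List.mem_append, not_or] at h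
      rw [substVCmd, substVTm_eq_self h.1, substVCo_eq_self h.2]
end

mutual
theorem substETm_eq_self {a : Nat} {e : CoTm} : ∀ {t : Tm}, a ∉ fcvTm t → substETm t a e = t
  | .var _, _ => rfl
  | .mu b _, h => by
      unfold substETm
      split_ifs with hb
      · rfl
      · rw [substECmd_eq_self (notMem_of_notMem_filter_ne h hb)]
  | .lam _ b _, h => by
      unfold substETm
      split_ifs with hb
      · rfl
      · rw [substECmd_eq_self (notMem_of_notMem_filter_ne h hb)]
  | .inl t, h => congrArg Tm.inl (substETm_eq_self (t := t) h)
  | .inr t, h => congrArg Tm.inr (substETm_eq_self (t := t) h)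

theorem substECo_eq_self {a : Nat} {e : CoTm} :
    ∀ {e' : CoTm}, a ∉ fcvCo e' → substECo e' a e = e'
  | .covar _, h => by simp_all [fcvCo, substECo, eq_comm]
  | .mut _ _, h => by rw [substECo, substECmd_eq_self h]
  | .app _ _, h => by
      rw [fcvCo, List.mem_append, not_or] at h
      rw [substECo, substETm_eq_self h.1, substECo_eq_self h.2]
  | .caseSum _ _ _ _, h => by
      rw [fcvCo, List.mem_append, not_or] at h
      rw [substECo, substECmd_eq_self h.1, substECmd_eq_self h.2]

theorem substECmd_eq_self {a : Nat} {e : CoTm} :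
    ∀ {c : Cmd}, a ∉ fcvCmd c → substECmd c a e = c
  | .cut _ _, h => by
      rw [fcvCmd, List.mem_append, not_or] at h
      rw [substECmd, substETm_eq_self h.1, substECo_eq_self h.2]
end

namespace RedQ

theorem betaMut_of_notMem_fv {v : Tm} {x : Nat} {c : Cmd} (hv : IsVal v) (hx : x ∉ fvCmd c) :
    RedQ (.cut v (.mut x c)) c := by
  simpa only [substVCmd_eq_self hx] using betaMut x c hv

theorem betaMu_of_notMem_fcv {a : Nat} {c : Cmd} (e : CoTm) (ha : a ∉ fcvCmd c) :
    RedQ (.cut (.mu a c) e) c := by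
  simpa only [substECmd_eq_self ha] using betaMu a c e

theorem etaArrow_mu {x a d : Nat} {c : Cmd} (e : CoTm) (hx : x ∉ fvCmd c) (ha : a ∉ fcvCmd c) :
    RedQ (.cut (.lam x a (.cut (.mu d c) (.app (.var x) (.covar a)))) e) (.cut (.mu d c) e) :=
  etaArrow x a e hx fun h => ha (List.mem_of_mem_filter h)

theorem not_cut_var_covar (x a : Nat) (c : Cmd) : ¬ RedQ (.cut (.var x) (.covar a)) c := nofun

end RedQ

/-- in call-by-value λμμ̃Q the full η law for functions is
    unsound: for any commands c₀, c₁ with x, α, δ unused, the command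
    ⟨λ(x·α).⟨μδ.c₀ ‖ x·α⟩ ‖ μ̃x.c₁⟩ reduces in one βμ̃-CBV step to c₁ and
    also reduces, via η→ followed by βμ-CBV, to c₀; moreover c₀ and c₁ can
    be chosen with no common reduct, so confluence fails. -/
theorem lmmQ_eta_arrow_unsound :
    (∀ (c₀ c₁ : Cmd) (x a d : Nat),
      x ∉ fvCmd c₀ → x ∉ fvCmd c₁ → a ∉ fcvCmd c₀ → d ∉ fcvCmd c₀ →
      RedQ (.cut (.lam x a (.cut (.mu d c₀) (.app (.var x) (.covar a)))) (.mut x c₁)) c₁ ∧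
      Relation.ReflTransGen RedQ
        (.cut (.lam x a (.cut (.mu d c₀) (.app (.var x) (.covar a)))) (.mut x c₁)) c₀) ∧
    (∃ (c₀ c₁ : Cmd) (x a d : Nat),
      x ∉ fvCmd c₀ ∧ x ∉ fvCmd c₁ ∧ a ∉ fcvCmd c₀ ∧ d ∉ fcvCmd c₀ ∧
      ¬ ∃ c' : Cmd, Relation.ReflTransGen RedQ c₀ c' ∧ Relation.ReflTransGen RedQ c₁ c') := by
  refine ⟨fun c₀ c₁ x a d hx₀ hx₁ ha₀ hd₀ => ⟨?_, ?_⟩, ?_⟩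
  · exact RedQ.betaMut_of_notMem_fv (IsVal.lam _ _ _) hx₁
  · exact .head (RedQ.etaArrow_mu _ hx₀ ha₀) (.single (RedQ.betaMu_of_notMem_fcv _ hd₀))
  · refine ⟨.cut (.var 0) (.covar 0), .cut (.var 1) (.covar 1), 2, 2, 2,
      by decide, by decide, by decide, by decide, ?_⟩
    exact Relation.not_join_reflTransGen_of_normal (RedQ.not_cut_var_covar 0 0)
      (RedQ.not_cut_var_covar 1 1) (by simp)

end LMM
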